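/- Let n ≥ 1 and for 0 ≤ i ≤ 2n-2 define S_{2n}(i) = (t^((2n-i)(2n-1)-i) - t^((2n-i)(2n-1)-2i-1)) · (t^(2n-1) + t^(2n-2) + ⋯ + 1). Then for all 0 ≤ ℓ ≤ 2n-2, Σ_{i=0}^{ℓ} S_{2n}(i) = Σ_{k=2n-ℓ-1}^{2n-1} t^{k(2n+1)} − Σ_{m=ℓ+1}^{2ℓ+1} t^{(2n-ℓ)(2n-1)-m}. -/

import Mathlib

/-!
Put `G_M = ∑_{k<M} x^k` and `b_i = (N - i)(N - 1) - (2i + 1)`. Both `(x^{i+1} - 1) G_N` and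
`(x^N - 1) G_{i+1}` equal `(x - 1) G_{i+1} G_N`, so the `i`-th summand is
`x^{b_i} (x^N - 1) G_{i+1} = x^{b_i + N} - x^{b_i} G_{i+1} + x^{b_i + N + 1} G_i`.
Since `b_{i-1} = b_i + N + 1`, the last two terms telescope, leaving the monomials
`x^{b_i + N} = x^{(N - 1 - i)(N + 1)}` minus `x^{b_ℓ} G_{ℓ+1}`.
-/

open Polynomial Finset

theorem sum_Icc_eq_sum_range_reflect {M : Type*} [AddCommMonoid M] (f : ℕ → M) (a b : ℕ) :
    ∑ k ∈ Icc a b, f k = ∑ i ∈ range (b + 1 - a), f (b - i) := by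
  refine sum_nbij' (b - ·) (b - ·) ?_ ?_ ?_ ?_ ?_ <;> intro k hk <;>
    simp only [mem_Icc, mem_range] at hk ⊢ <;> first | omega | congr 1; omega

theorem two_mul_add_two_le_sub_mul_sub_one {N i : ℕ} (h : i + 2 ≤ N) :
    2 * i + 2 ≤ (N - i) * (N - 1) := by
  have := Nat.mul_le_mul (show 2 ≤ N - i by omega) (show i + 1 ≤ N - 1 by omega)
  omega

section GeomSum

variable {R : Type*} [CommRing R]

theorem pow_sub_one_mul_geom_sum_comm (x : R) (a b : ℕ) :
    (x ^ a - 1) * ∑ k ∈ range b, x ^ k = (x ^ b - 1) * ∑ k ∈ range a, x ^ k := by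
  rw [← mul_geom_sum, ← mul_geom_sum]; ring

theorem pow_add_sub_pow_mul_geom_sum (x : R) (b i N : ℕ) :
    (x ^ (b + (i + 1)) - x ^ b) * ∑ k ∈ range N, x ^ k
      = x ^ (b + N) - x ^ b * ∑ k ∈ range (i + 1), x ^ k
        + x ^ (b + N + 1) * ∑ k ∈ range i, x ^ k := by
  have hshift : x ^ N * ∑ k ∈ range (i + 1), x ^ k
      = x ^ N + x ^ (N + 1) * ∑ k ∈ range i, x ^ k := by
    rw [geom_sum_succ, pow_succ]; ring
  calc (x ^ (b + (i + 1)) - x ^ b) * ∑ k ∈ range N, x ^ k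
      = x ^ b * ((x ^ (i + 1) - 1) * ∑ k ∈ range N, x ^ k) := by ring
    _ = x ^ b * ((x ^ N - 1) * ∑ k ∈ range (i + 1), x ^ k) := by
        rw [pow_sub_one_mul_geom_sum_comm]
    _ = x ^ b * (x ^ N * ∑ k ∈ range (i + 1), x ^ k)
          - x ^ b * ∑ k ∈ range (i + 1), x ^ k := by ring
    _ = _ := by rw [hshift]; ring

theorem sum_range_pow_add_sub_pow_mul_geom_sum (x : R) (N ℓ : ℕ) (b : ℕ → ℕ)
    (hb : ∀ i < ℓ, b i = b (i + 1) + N + 1) :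
    ∑ i ∈ range (ℓ + 1), (x ^ (b i + (i + 1)) - x ^ b i) * ∑ k ∈ range N, x ^ k
      = ∑ i ∈ range (ℓ + 1), x ^ (b i + N)
        - x ^ b ℓ * ∑ k ∈ range (ℓ + 1), x ^ k := by
  induction ℓ with
  | zero => simp [pow_add_sub_pow_mul_geom_sum]
  | succ ℓ ih =>
    rw [sum_range_succ, ih fun i hi => hb i (by omega), pow_add_sub_pow_mul_geom_sum,
      hb ℓ (by omega), sum_range_succ (fun i => x ^ (b i + N)) (ℓ + 1)]
    ring

theorem sum_range_pow_sub_pow_mul_geom_sum_eq (x : R) {N ℓ : ℕ} (h : ℓ + 2 ≤ N) :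
    ∑ i ∈ range (ℓ + 1),
        (x ^ ((N - i) * (N - 1) - i) - x ^ ((N - i) * (N - 1) - (2 * i + 1))) *
          ∑ k ∈ range N, x ^ k =
      ∑ k ∈ Icc (N - ℓ - 1) (N - 1), x ^ (k * (N + 1))
        - ∑ m ∈ Icc (ℓ + 1) (2 * ℓ + 1), x ^ ((N - ℓ) * (N - 1) - m) := by
  have hexp_first : ∀ i ∈ range (ℓ + 1),
      (N - i) * (N - 1) - i = (N - i) * (N - 1) - (2 * i + 1) + (i + 1) := by
    intro i hi
    simp only [mem_range] at hi
    have := two_mul_add_two_le_sub_mul_sub_one (show i + 2 ≤ N by omega)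
    omega
  have hexp_succ : ∀ i < ℓ, (N - i) * (N - 1) - (2 * i + 1)
      = (N - (i + 1)) * (N - 1) - (2 * (i + 1) + 1) + N + 1 := by
    intro i hi
    have := two_mul_add_two_le_sub_mul_sub_one (show i + 1 + 2 ≤ N by omega)
    have hstep : (N - i) * (N - 1) = (N - (i + 1)) * (N - 1) + (N - 1) := by
      rw [show N - i = N - (i + 1) + 1 by omega, add_mul, one_mul]
    omega
  have hexp_diag : ∀ i ∈ range (ℓ + 1),
      (N - i) * (N - 1) - (2 * i + 1) + N = (N - 1 - i) * (N + 1) := by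
    intro i hi
    have hi : i + 2 ≤ N := by simp only [mem_range] at hi; omega
    have := two_mul_add_two_le_sub_mul_sub_one hi
    zify [show 2 * i + 1 ≤ (N - i) * (N - 1) by omega, show i ≤ N by omega,
      show 1 ≤ N by omega, show i ≤ N - 1 by omega]
    ring
  rw [sum_congr rfl fun i hi => by rw [hexp_first i hi],
    sum_range_pow_add_sub_pow_mul_geom_sum x N ℓ _ hexp_succ,
    sum_Icc_eq_sum_range_reflect, sum_Icc_eq_sum_range_reflect,
    show N - 1 + 1 - (N - ℓ - 1) = ℓ + 1 by omega,
    show 2 * ℓ + 1 + 1 - (ℓ + 1) = ℓ + 1 by omega,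
    mul_sum]
  have := two_mul_add_two_le_sub_mul_sub_one h
  congr 1 <;> refine sum_congr rfl fun i hi => ?_
  · rw [hexp_diag i hi]
  · rw [← pow_add]; simp only [mem_range] at hi; congr 1; omega

end GeomSum

/-- The inductive summation identity for the partial sums `S_{2n}(i)` used in the
computation of the Alexander polynomial of `T_{2n,2n+1}`. -/
theorem partial_sums_S2n (n ℓ : ℕ) (hn : 1 ≤ n) (hℓ : ℓ ≤ 2 * n - 2) :
    (∑ i ∈ Finset.range (ℓ + 1),
        ((X : ℤ[X]) ^ ((2 * n - i) * (2 * n - 1) - i)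
          - (X : ℤ[X]) ^ ((2 * n - i) * (2 * n - 1) - (2 * i + 1))) *
          (∑ k ∈ Finset.range (2 * n), (X : ℤ[X]) ^ k)) =
      (∑ k ∈ Finset.Icc (2 * n - ℓ - 1) (2 * n - 1), (X : ℤ[X]) ^ (k * (2 * n + 1)))
        - ∑ m ∈ Finset.Icc (ℓ + 1) (2 * ℓ + 1),
            (X : ℤ[X]) ^ ((2 * n - ℓ) * (2 * n - 1) - m) :=
  sum_range_pow_sub_pow_mul_geom_sum_eq X (by omega)
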